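/- arXiv:1802.10489 — 5 statements merged into one kernel-verified Lean document; each statement's English description precedes it below -/
import Mathlib

section
/- For every integer n ≥ 2, Γ(n/2)/Γ((n+1)/2) ≤ 2/√(2n−1) ≤ √(π/n). -/
/-!
Put `g x = Γ(x + 1/2)² / (Γ(x)² (x - 1/4))` for `x > 1/4`. The recurrence `Γ(s + 1) = s Γ(s)`
gives `g (x + 1) / g x = (x + 1/2)² (x - 1/4) / (x² (x + 3/4)) < 1`, while log-convexity of `Γ`
at the midpoint `x + 1` of `x + 1/2` and `x + 3/2` gives `g x ≥ x² / ((x + 1/2)(x - 1/4))`, which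
tends to `1` as `x → ∞`. Hence `g x ≥ g (x + k) ≥ (x + k)² / ((x + k + 1/2)(x + k - 1/4)) → 1`,
i.e. `Γ(x) √(x - 1/4) ≤ Γ(x + 1/2)`; the theorem is the case `x = n/2`.
-/
open Filter Topology Real

namespace Real

theorem Gamma_add_half_sq_le_Gamma_mul_Gamma_add_one {s : ℝ} (hs : 0 < s) :
    Gamma (s + 1 / 2) ^ 2 ≤ Gamma s * Gamma (s + 1) := by
  have h := Gamma_mul_add_mul_le_rpow_Gamma_mul_rpow_Gamma hs (by positivity : 0 < s + 1)
    (by norm_num : (0 : ℝ) < 1 / 2) (by norm_num : (0 : ℝ) < 1 / 2) (by norm_num)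
  rw [show 1 / 2 * s + 1 / 2 * (s + 1) = s + 1 / 2 by ring, ← sqrt_eq_rpow, ← sqrt_eq_rpow,
    ← sqrt_mul (Gamma_pos_of_pos hs).le] at h
  calc Gamma (s + 1 / 2) ^ 2 ≤ sqrt (Gamma s * Gamma (s + 1)) ^ 2 := by gcongr
    _ = Gamma s * Gamma (s + 1) :=
        sq_sqrt (mul_pos (Gamma_pos_of_pos hs) (Gamma_pos_of_pos (by positivity))).le

theorem mul_Gamma_sq_le_Gamma_add_half_sq {x : ℝ} (hx : 0 < x) :
    x ^ 2 * Gamma x ^ 2 ≤ (x + 1 / 2) * Gamma (x + 1 / 2) ^ 2 := by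
  have h := Gamma_add_half_sq_le_Gamma_mul_Gamma_add_one (by positivity : 0 < x + 1 / 2)
  rw [show x + 1 / 2 + 1 / 2 = x + 1 by ring, Gamma_add_one hx.ne',
    Gamma_add_one (by positivity : x + 1 / 2 ≠ 0)] at h
  nlinarith [h]

noncomputable def gammaHalfQuot (x : ℝ) : ℝ := Gamma (x + 1 / 2) ^ 2 / (Gamma x ^ 2 * (x - 1 / 4))

theorem gammaHalfQuot_add_one_le {x : ℝ} (hx : 1 / 4 < x) :
    gammaHalfQuot (x + 1) ≤ gammaHalfQuot x := by
  have hx0 : 0 < x := by linarith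
  have hA := Gamma_pos_of_pos (by positivity : 0 < x + 1 / 2)
  have hB := Gamma_pos_of_pos hx0
  unfold gammaHalfQuot
  rw [show x + 1 + 1 / 2 = (x + 1 / 2) + 1 by ring, Gamma_add_one hx0.ne',
    Gamma_add_one (by positivity : x + 1 / 2 ≠ 0),
    div_le_div_iff₀ (mul_pos (by positivity) (by linarith)) (mul_pos (by positivity) (by linarith))]
  -- the difference of the two sides is `Γ(x + 1/2)² Γ(x)² / 16`
  nlinarith [mul_pos (pow_pos hA 2) (pow_pos hB 2)]

theorem le_gammaHalfQuot {x : ℝ} (hx : 1 / 4 < x) :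
    x ^ 2 / ((x + 1 / 2) * (x - 1 / 4)) ≤ gammaHalfQuot x := by
  have hB := Gamma_pos_of_pos (by linarith : 0 < x)
  unfold gammaHalfQuot
  rw [div_le_div_iff₀ (by nlinarith) (by nlinarith [mul_pos hB hB])]
  nlinarith [mul_Gamma_sq_le_Gamma_add_half_sq (by linarith : 0 < x)]

theorem tendsto_sq_div_add_half_mul_sub_quarter :
    Tendsto (fun y : ℝ => y ^ 2 / ((y + 1 / 2) * (y - 1 / 4))) atTop (𝓝 1) := by
  have h : Tendsto (fun y : ℝ => 1 / ((1 + 1 / 2 * y⁻¹) * (1 - 1 / 4 * y⁻¹))) atTop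
      (𝓝 (1 / ((1 + 1 / 2 * 0) * (1 - 1 / 4 * 0)))) :=
    tendsto_const_nhds.div ((tendsto_const_nhds.add (tendsto_inv_atTop_zero.const_mul _)).mul
      (tendsto_const_nhds.sub (tendsto_inv_atTop_zero.const_mul _))) (by norm_num)
  norm_num at h
  refine h.congr' ?_
  filter_upwards [eventually_gt_atTop 0] with y hy
  field_simp

theorem one_le_gammaHalfQuot {x : ℝ} (hx : 1 / 4 < x) : 1 ≤ gammaHalfQuot x := by
  have hanti : ∀ k : ℕ, gammaHalfQuot (x + k) ≤ gammaHalfQuot x := by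
    intro k
    induction k with
    | zero => simp
    | succ k ih =>
      push_cast
      rw [← add_assoc]
      exact (gammaHalfQuot_add_one_le (by linarith [k.cast_nonneg (α := ℝ)])).trans ih
  have hlim : Tendsto (fun k : ℕ => (x + k) ^ 2 / ((x + k + 1 / 2) * (x + k - 1 / 4))) atTop (𝓝 1) :=
    tendsto_sq_div_add_half_mul_sub_quarter.comp
      (tendsto_atTop_add_const_left _ x tendsto_natCast_atTop_atTop)
  refine le_of_tendsto hlim (Eventually.of_forall fun k => ?_)
  exact (le_gammaHalfQuot (by linarith [k.cast_nonneg (α := ℝ)])).trans (hanti k)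

theorem Gamma_mul_sqrt_sub_quarter_le_Gamma_add_half {x : ℝ} (hx : 1 / 4 < x) :
    Gamma x * sqrt (x - 1 / 4) ≤ Gamma (x + 1 / 2) := by
  have h := one_le_gammaHalfQuot hx
  unfold gammaHalfQuot at h
  rw [one_le_div (mul_pos (by positivity) (by linarith))] at h
  rw [← pow_le_pow_iff_left₀ (by positivity) (Gamma_pos_of_pos (by linarith)).le two_ne_zero,
    mul_pow, sq_sqrt (by linarith)]
  exact h

theorem two_div_sqrt_two_mul_sub_one_le_sqrt_pi_div {t : ℝ} (ht : 3 / 2 ≤ t) :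
    2 / sqrt (2 * t - 1) ≤ sqrt (π / t) := by
  rw [le_sqrt (by positivity) (by positivity), div_pow, sq_sqrt (by linarith),
    div_le_div_iff₀ (by linarith) (by linarith)]
  nlinarith [pi_gt_three]

end Real

theorem stmt7 (n : ℕ) (hn : 2 ≤ n) :
    Real.Gamma ((n : ℝ) / 2) / Real.Gamma (((n : ℝ) + 1) / 2)
      ≤ 2 / Real.sqrt (2 * (n : ℝ) - 1) ∧
    2 / Real.sqrt (2 * (n : ℝ) - 1) ≤ Real.sqrt (Real.pi / n) := by
  have hn' : (2 : ℝ) ≤ n := by exact_mod_cast hn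
  refine ⟨?_, two_div_sqrt_two_mul_sub_one_le_sqrt_pi_div (by linarith)⟩
  have hx : 1 / 4 < (n : ℝ) / 2 := by linarith
  have hsqrt : sqrt (2 * (n : ℝ) - 1) = 2 * sqrt ((n : ℝ) / 2 - 1 / 4) := by
    rw [show 2 * (n : ℝ) - 1 = 2 ^ 2 * ((n : ℝ) / 2 - 1 / 4) by ring,
      sqrt_mul (by norm_num), sqrt_sq (by norm_num)]
  rw [hsqrt, show ((n : ℝ) + 1) / 2 = (n : ℝ) / 2 + 1 / 2 by ring,
    div_le_div_iff₀ (Gamma_pos_of_pos (by linarith)) (by positivity)]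
  linarith [Gamma_mul_sqrt_sub_quarter_le_Gamma_add_half hx]
end

section
/- Let w, z ∈ R^n with ‖w‖, ‖z‖ ≤ R, let δ > 0, and let a be uniform on S^{n−1} and τ ∼ N(0, R²/n) independent. Then the probability that the hyperplane {x : a·x = τ} separates some point of the δ-ball around w from some point of the δ-ball around z is at most √(2/π)·(‖w − z‖/R + δ√n/R). -/
open MeasureTheory ProbabilityTheory
open scoped RealInnerProductSpace ENNReal NNReal

/-!
If the hyperplane `{⟪a, ·⟫ = τ}` separates a point of the `δ`-ball around `w` from one of the
`δ`-ball around `z`, Cauchy–Schwarz puts `τ` in an interval of length `|⟪a, w - z⟫| + 2δ`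
(for `‖a‖ = 1`). Conditionally on `a`, the Gaussian `τ` falls into it with probability at most
its length times the peak density `√n / (√(2π) R)`. Rotation invariance makes `E ⟪a, y⟫²` depend
only on `‖y‖`, so summing over an orthonormal basis gives `E ⟪a, y⟫² = ‖y‖² / n`, and
Cauchy–Schwarz then gives `E |⟪a, w - z⟫| ≤ ‖w - z‖ / √n`.
-/

theorem Real.mem_uIcc_of_sign_sub_ne {s r t : ℝ} (h : Real.sign (s - t) ≠ Real.sign (r - t)) :
    t ∈ Set.uIcc s r := by
  by_contra hout
  rw [Set.mem_uIcc, not_or, not_and_or, not_and_or, not_le, not_le, not_le, not_le] at hout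
  rcases hout with ⟨hs | hs, hr | hr⟩
  all_goals first
    | exact h (by rw [Real.sign_of_pos (by linarith), Real.sign_of_pos (by linarith)])
    | exact h (by rw [Real.sign_of_neg (by linarith), Real.sign_of_neg (by linarith)])

section InnerProductSpace

variable {E : Type*} [NormedAddCommGroup E] [InnerProductSpace ℝ E]

theorem exists_linearIsometryEquiv_apply_eq_of_norm_eq {u v : E} (h : ‖u‖ = ‖v‖) :
    ∃ O : E ≃ₗᵢ[ℝ] E, O u = v :=
  ⟨(ℝ ∙ (u - v))ᗮ.reflection, Submodule.reflection_sub h⟩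

theorem mem_Icc_of_sign_inner_sub_ne {x u v w z : E} {δ t : ℝ} (hu : ‖u - w‖ ≤ δ)
    (hv : ‖v - z‖ ≤ δ) (h : Real.sign (⟪x, u⟫ - t) ≠ Real.sign (⟪x, v⟫ - t)) :
    t ∈ Set.Icc (min ⟪x, w⟫ ⟪x, z⟫ - ‖x‖ * δ) (max ⟪x, w⟫ ⟪x, z⟫ + ‖x‖ * δ) := by
  have near {p q : E} (hpq : ‖p - q‖ ≤ δ) : |⟪x, p⟫ - ⟪x, q⟫| ≤ ‖x‖ * δ := by
    rw [← inner_sub_right]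
    exact (abs_real_inner_le_norm x _).trans (by gcongr)
  have hwu := abs_le.mp (near hu)
  have hzv := abs_le.mp (near hv)
  rcases Set.mem_uIcc.mp (Real.mem_uIcc_of_sign_sub_ne h) with ⟨h1, h2⟩ | ⟨h1, h2⟩ <;>
    constructor <;>
    linarith [min_le_left ⟪x, w⟫ ⟪x, z⟫, min_le_right ⟪x, w⟫ ⟪x, z⟫,
      le_max_left ⟪x, w⟫ ⟪x, z⟫, le_max_right ⟪x, w⟫ ⟪x, z⟫]

end InnerProductSpace

theorem gaussianReal_le_smul_volume (m : ℝ) {v : ℝ≥0} (hv : v ≠ 0) :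
    gaussianReal m v ≤ ENNReal.ofReal (√(2 * Real.pi * v))⁻¹ • volume := by
  rw [gaussianReal_of_var_ne_zero m hv, ← withDensity_const]
  refine withDensity_mono (ae_of_all _ fun x => ENNReal.ofReal_le_ofReal ?_)
  rw [gaussianPDFReal_def]
  refine mul_le_of_le_one_right (by positivity) (Real.exp_le_one_iff.mpr ?_)
  exact div_nonpos_of_nonpos_of_nonneg (neg_nonpos.mpr (sq_nonneg _)) (by positivity)

theorem ProbabilityTheory.IndepFun.measure_mem_Icc_le {Ω α : Type*} [MeasurableSpace Ω]
    [MeasurableSpace α] {P : Measure Ω} [IsFiniteMeasure P] {X : Ω → α} {Y : Ω → ℝ}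
    (hXY : IndepFun X Y P) (hX : Measurable X) (hY : Measurable Y) {f g : α → ℝ}
    (hf : Measurable f) (hg : Measurable g) {C : ℝ≥0∞} (hC : P.map Y ≤ C • volume) :
    P {ω | Y ω ∈ Set.Icc (f (X ω)) (g (X ω))}
      ≤ C * ∫⁻ x, ENNReal.ofReal (g x - f x) ∂(P.map X) := by
  set U : Set (α × ℝ) := {p | p.2 ∈ Set.Icc (f p.1) (g p.1)}
  have hU : MeasurableSet U :=
    (measurableSet_le (hf.comp measurable_fst) measurable_snd).inter
      (measurableSet_le measurable_snd (hg.comp measurable_fst))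
  calc P {ω | Y ω ∈ Set.Icc (f (X ω)) (g (X ω))}
      = (P.map fun ω => (X ω, Y ω)) U := (Measure.map_apply (hX.prodMk hY) hU).symm
    _ = ∫⁻ x, P.map Y (Set.Icc (f x) (g x)) ∂(P.map X) := by
      rw [hXY.map_prod_eq_prod_map_map hX.aemeasurable hY.aemeasurable, Measure.prod_apply hU]
      rfl
    _ ≤ ∫⁻ x, C * ENNReal.ofReal (g x - f x) ∂(P.map X) := by
      refine lintegral_mono fun x => ?_
      rw [← Real.volume_Icc]
      exact hC _
    _ = C * ∫⁻ x, ENNReal.ofReal (g x - f x) ∂(P.map X) :=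
      lintegral_const_mul _ (hg.sub hf).ennreal_ofReal

section Sphere

variable {E : Type*} [NormedAddCommGroup E] [InnerProductSpace ℝ E] [MeasurableSpace E]
  [BorelSpace E] {μ : Measure E}

theorem lintegral_comp_inner_eq_of_norm_eq (hμ : ∀ O : E ≃ₗᵢ[ℝ] E, μ.map O = μ)
    {f : ℝ → ℝ≥0∞} (hf : Measurable f) {u v : E} (h : ‖u‖ = ‖v‖) :
    ∫⁻ x, f ⟪x, u⟫ ∂μ = ∫⁻ x, f ⟪x, v⟫ ∂μ := by
  obtain ⟨O, rfl⟩ := exists_linearIsometryEquiv_apply_eq_of_norm_eq h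
  have hmeas : Measurable fun x : E => f ⟪x, O u⟫ := hf.comp (by fun_prop)
  conv_rhs => rw [← hμ O, lintegral_map hmeas O.continuous.measurable]
  simp_rw [LinearIsometryEquiv.inner_map_map]

variable [FiniteDimensional ℝ E] [IsProbabilityMeasure μ]

theorem finrank_mul_lintegral_inner_sq (hμ : ∀ O : E ≃ₗᵢ[ℝ] E, μ.map O = μ)
    (hsphere : ∀ᵐ x ∂μ, ‖x‖ = 1) (y : E) :
    Module.finrank ℝ E * ∫⁻ x, ENNReal.ofReal (⟪x, y⟫ ^ 2) ∂μ = ENNReal.ofReal (‖y‖ ^ 2) := by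
  set b := stdOrthonormalBasis ℝ E
  have hf : Measurable fun s : ℝ => ENNReal.ofReal (s ^ 2) := by fun_prop
  have hb (i) : ‖‖y‖ • b i‖ = ‖y‖ := by simp [norm_smul]
  calc (Module.finrank ℝ E : ℝ≥0∞) * ∫⁻ x, ENNReal.ofReal (⟪x, y⟫ ^ 2) ∂μ
      = ∑ i, ∫⁻ x, ENNReal.ofReal (⟪x, ‖y‖ • b i⟫ ^ 2) ∂μ := by
        rw [Finset.sum_congr rfl fun i _ => lintegral_comp_inner_eq_of_norm_eq hμ hf (hb i),
          Finset.sum_const, Finset.card_univ, Fintype.card_fin, nsmul_eq_mul]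
    _ = ∫⁻ x, ENNReal.ofReal (‖y‖ ^ 2 * ‖x‖ ^ 2) ∂μ := by
        rw [← lintegral_finsetSum _ fun i _ => by fun_prop]
        refine lintegral_congr fun x => ?_
        rw [← ENNReal.ofReal_sum_of_nonneg fun i _ => sq_nonneg _, ← b.sum_sq_inner_left x,
          Finset.mul_sum]
        simp_rw [real_inner_smul_right, mul_pow]
    _ = ENNReal.ofReal (‖y‖ ^ 2) := by
        rw [lintegral_congr_ae (hsphere.mono fun x hx => by rw [hx, one_pow, mul_one]),
          lintegral_const, measure_univ, mul_one]

theorem lintegral_abs_inner_le (hμ : ∀ O : E ≃ₗᵢ[ℝ] E, μ.map O = μ)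
    (hsphere : ∀ᵐ x ∂μ, ‖x‖ = 1) (y : E) :
    ∫⁻ x, ENNReal.ofReal |⟪x, y⟫| ∂μ ≤ ENNReal.ofReal (‖y‖ / √(Module.finrank ℝ E)) := by
  have hmeas : AEMeasurable (fun x => ENNReal.ofReal |⟪x, y⟫|) μ := by fun_prop
  have hsq (x : E) : ENNReal.ofReal |⟪x, y⟫| ^ (2 : ℝ) = ENNReal.ofReal (⟪x, y⟫ ^ 2) := by
    rw [ENNReal.ofReal_rpow_of_nonneg (abs_nonneg _) two_pos.le, Real.rpow_two, sq_abs]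
  have hn : Module.finrank ℝ E ≠ 0 := by
    obtain ⟨x, hx⟩ := hsphere.exists
    exact Module.finrank_pos_iff_exists_ne_zero.mpr ⟨x, norm_ne_zero_iff.mp (by simp [hx])⟩ |>.ne'
  have hn_pos : (0 : ℝ) < Module.finrank ℝ E := by positivity
  calc ∫⁻ x, ENNReal.ofReal |⟪x, y⟫| ∂μ
      = ∫⁻ x, ENNReal.ofReal |⟪x, y⟫| * 1 ∂μ := by simp_rw [mul_one]
    _ ≤ (∫⁻ x, ENNReal.ofReal |⟪x, y⟫| ^ (2 : ℝ) ∂μ) ^ (1 / 2 : ℝ)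
          * (∫⁻ _, 1 ^ (2 : ℝ) ∂μ) ^ (1 / 2 : ℝ) :=
        ENNReal.lintegral_mul_le_Lp_mul_Lq μ Real.HolderConjugate.two_two hmeas aemeasurable_const
    _ = (ENNReal.ofReal (‖y‖ ^ 2) / Module.finrank ℝ E) ^ (1 / 2 : ℝ) := by
        simp only [hsq, ENNReal.one_rpow, lintegral_const, measure_univ, mul_one]
        congr 1
        rw [ENNReal.eq_div_iff (by simpa using hn) (ENNReal.natCast_ne_top _),
          finrank_mul_lintegral_inner_sq hμ hsphere y]
    _ = ENNReal.ofReal (‖y‖ / √(Module.finrank ℝ E)) := by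
        rw [← ENNReal.ofReal_natCast, ← ENNReal.ofReal_div_of_pos hn_pos,
          ENNReal.ofReal_rpow_of_nonneg (by positivity) (by norm_num), ← Real.sqrt_eq_rpow,
          Real.sqrt_div' _ hn_pos.le, Real.sqrt_sq (norm_nonneg y)]

theorem lintegral_max_sub_min_inner_le (hμ : ∀ O : E ≃ₗᵢ[ℝ] E, μ.map O = μ)
    (hsphere : ∀ᵐ x ∂μ, ‖x‖ = 1) (w z : E) {δ : ℝ} (hδ : 0 ≤ δ) :
    ∫⁻ x, ENNReal.ofReal (max ⟪x, w⟫ ⟪x, z⟫ + ‖x‖ * δ - (min ⟪x, w⟫ ⟪x, z⟫ - ‖x‖ * δ)) ∂μ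
      ≤ ENNReal.ofReal (‖w - z‖ / √(Module.finrank ℝ E) + 2 * δ) := by
  have hwidth : ∀ᵐ x ∂μ, ENNReal.ofReal
      (max ⟪x, w⟫ ⟪x, z⟫ + ‖x‖ * δ - (min ⟪x, w⟫ ⟪x, z⟫ - ‖x‖ * δ))
        = ENNReal.ofReal |⟪x, w - z⟫| + ENNReal.ofReal (2 * δ) :=
    hsphere.mono fun x hx => by
      rw [← ENNReal.ofReal_add (abs_nonneg _) (by positivity), inner_sub_right,
        ← max_sub_min_eq_abs', hx]
      ring_nf
  rw [lintegral_congr_ae hwidth, lintegral_add_right _ measurable_const, lintegral_const,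
    measure_univ, mul_one, ENNReal.ofReal_add (by positivity) (by positivity)]
  gcongr
  exact lintegral_abs_inner_le hμ hsphere (w - z)

end Sphere

theorem inv_sqrt_two_pi_var_mul_le {n R d δ : ℝ} (hn : 0 < n) (hR : 0 < R) (hd : 0 ≤ d) :
    (√(2 * Real.pi * (R ^ 2 / n)))⁻¹ * (d / √n + 2 * δ)
      ≤ √(2 / Real.pi) * (d / R + δ * √n / R) := by
  have hsn : 0 < √n := Real.sqrt_pos.mpr hn
  have hs : 0 < √(2 * Real.pi) := by positivity
  have hvar : √(2 * Real.pi * (R ^ 2 / n)) = √(2 * Real.pi) * R / √n := by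
    rw [Real.sqrt_mul (by positivity), Real.sqrt_div' _ hn.le, Real.sqrt_sq hR.le, mul_div_assoc]
  have hconst : √(2 / Real.pi) = 2 / √(2 * Real.pi) := by
    rw [eq_div_iff hs.ne', ← Real.sqrt_mul (by positivity),
      show 2 / Real.pi * (2 * Real.pi) = 2 ^ 2 by field_simp, Real.sqrt_sq zero_le_two]
  rw [hvar, hconst]
  field_simp
  nlinarith [mul_nonneg hd hsn.le]

theorem stmt9 (n : ℕ) (hn : 1 ≤ n) (R δ : ℝ) (hR : 0 < R) (hδ : 0 < δ)
    (Ω : Type*) [MeasureSpace Ω] [IsProbabilityMeasure (ℙ : Measure Ω)]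
    (a : Ω → EuclideanSpace ℝ (Fin n)) (τ : Ω → ℝ)
    (hma : Measurable a) (hmτ : Measurable τ)
    (hasphere : (Measure.map a ℙ) (Metric.sphere (0 : EuclideanSpace ℝ (Fin n)) 1) = 1)
    (hainv : ∀ O : EuclideanSpace ℝ (Fin n) ≃ₗᵢ[ℝ] EuclideanSpace ℝ (Fin n),
      Measure.map (⇑O ∘ a) ℙ = Measure.map a ℙ)
    (hτgauss : Measure.map τ ℙ = gaussianReal 0 ⟨R ^ 2 / n, by positivity⟩)
    (hindep : IndepFun a τ ℙ)
    (w z : EuclideanSpace ℝ (Fin n)) :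
    ℙ {ω | ∃ u v : EuclideanSpace ℝ (Fin n), ‖u - w‖ ≤ δ ∧ ‖v - z‖ ≤ δ ∧
        Real.sign (⟪a ω, u⟫ - τ ω) ≠ Real.sign (⟪a ω, v⟫ - τ ω)}
      ≤ ENNReal.ofReal
        (Real.sqrt (2 / Real.pi) * (‖w - z‖ / R + δ * Real.sqrt (n : ℝ) / R)) := by
  set μ := (ℙ : Measure Ω).map a
  have : IsProbabilityMeasure μ := Measure.isProbabilityMeasure_map hma.aemeasurable
  have hμinv (O : EuclideanSpace ℝ (Fin n) ≃ₗᵢ[ℝ] EuclideanSpace ℝ (Fin n)) : μ.map O = μ := by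
    rw [Measure.map_map O.continuous.measurable hma, hainv O]
  have hμsphere : ∀ᵐ x ∂μ, ‖x‖ = 1 :=
    (ae_iff.mpr ((prob_compl_eq_zero_iff Metric.isClosed_sphere.measurableSet).mpr hasphere)).mono
      fun x hx => mem_sphere_zero_iff_norm.mp hx
  have hvar : (⟨R ^ 2 / n, by positivity⟩ : ℝ≥0) ≠ 0 :=
    pos_iff_ne_zero.mp (NNReal.coe_pos.mp (show (0 : ℝ) < R ^ 2 / n by positivity))
  calc ℙ {ω | ∃ u v : EuclideanSpace ℝ (Fin n), ‖u - w‖ ≤ δ ∧ ‖v - z‖ ≤ δ ∧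
        Real.sign (⟪a ω, u⟫ - τ ω) ≠ Real.sign (⟪a ω, v⟫ - τ ω)}
      ≤ ℙ {ω | τ ω ∈ Set.Icc (min ⟪a ω, w⟫ ⟪a ω, z⟫ - ‖a ω‖ * δ)
          (max ⟪a ω, w⟫ ⟪a ω, z⟫ + ‖a ω‖ * δ)} :=
        measure_mono fun ω ⟨u, v, hu, hv, h⟩ => mem_Icc_of_sign_inner_sub_ne hu hv h
    _ ≤ ENNReal.ofReal (√(2 * Real.pi * (R ^ 2 / n)))⁻¹
          * ENNReal.ofReal (‖w - z‖ / √n + 2 * δ) := by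
        refine (hindep.measure_mem_Icc_le hma hmτ (f := fun x => min ⟪x, w⟫ ⟪x, z⟫ - ‖x‖ * δ)
          (g := fun x => max ⟪x, w⟫ ⟪x, z⟫ + ‖x‖ * δ) (by fun_prop) (by fun_prop)
          (hτgauss ▸ gaussianReal_le_smul_volume 0 hvar)).trans ?_
        gcongr _ * ?_
        simpa using lintegral_max_sub_min_inner_le hμinv hμsphere w z hδ.le
    _ ≤ _ := by
        rw [← ENNReal.ofReal_mul (by positivity)]
        exact ENNReal.ofReal_le_ofReal
          (inv_sqrt_two_pi_var_mul_le (by positivity) hR (norm_nonneg _))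
end

section
/- For all real x, y such that B(x,y) is defined with x, y > 0, the Beta function satisfies B(x, y) ≥ √(2π) · x^{x−1/2} · y^{y−1/2} / (x + y)^{x+y−1/2}. -/
/-!
Write `μ(x) = ∑ₖ g(x + k)` with `g(t) = (t + 1/2) log (1 + 1/t) - 1` (Gudermann's series for
Binet's function). Expanding `log (1 + 1/t)` in powers of `1/(2t+1)` shows that `g` is a series
with nonnegative coefficients in the convex decreasing function `(2t+1)⁻²`, so `g`, hence `μ`,
is nonnegative, antitone and convex, and `g(t) ≤ 1/(4t) - 1/(4(t+1))` makes `μ(x) ≤ 1/(4x)`.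
Since `g(x) = μ(x) - μ(x+1)`, the convex function `(x - 1/2) log x - x + μ(x)` satisfies the
functional equation of `log Γ`, so by Bohr–Mollerup
`log Γ(x) = (x - 1/2) log x - x + log √(2π) + μ(x)`, the constant coming from Stirling's formula
for `n!`. Then `log B(x, y)` exceeds the logarithm of the claimed bound by
`μ(x) - μ(x + y) + μ(y) ≥ 0`.
-/

open Real Filter Set Topology

section SeriesOfFunctions

variable {ι E : Type*}

theorem antitoneOn_tsum [Preorder E] {f : ι → E → ℝ} {s : Set E} (hf : ∀ i, AntitoneOn (f i) s)
    (hsum : ∀ x ∈ s, Summable fun i ↦ f i x) : AntitoneOn (fun x ↦ ∑' i, f i x) s :=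
  fun _ hx _ hy hxy ↦ (hsum _ hy).tsum_le_tsum (fun i ↦ hf i hx hy hxy) (hsum _ hx)

theorem convexOn_tsum [AddCommMonoid E] [Module ℝ E] {f : ι → E → ℝ} {s : Set E}
    (hs : Convex ℝ s) (hf : ∀ i, ConvexOn ℝ s (f i))
    (hsum : ∀ x ∈ s, Summable fun i ↦ f i x) : ConvexOn ℝ s (fun x ↦ ∑' i, f i x) := by
  refine ⟨hs, fun x hx y hy a b ha hb hab ↦ ?_⟩
  calc ∑' i, f i (a • x + b • y)
      ≤ ∑' i, (a * f i x + b * f i y) :=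
        (hsum _ (hs hx hy ha hb hab)).tsum_le_tsum (fun i ↦ (hf i).2 hx hy ha hb hab)
          (((hsum x hx).mul_left a).add ((hsum y hy).mul_left b))
    _ = a • ∑' i, f i x + b • ∑' i, f i y := by
        rw [((hsum x hx).mul_left a).tsum_add ((hsum y hy).mul_left b), tsum_mul_left,
          tsum_mul_left, smul_eq_mul, smul_eq_mul]

end SeriesOfFunctions

namespace Real

noncomputable def gudermannTerm (t : ℝ) : ℝ := (t + 1 / 2) * log (1 + t⁻¹) - 1

theorem hasSum_gudermannTerm {t : ℝ} (ht : 0 < t) :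
    HasSum (fun k : ℕ ↦ (2 * k + 3 : ℝ)⁻¹ * (2 * t + 1)⁻¹ ^ (2 * k + 2)) (gudermannTerm t) := by
  have hu : (t + 2⁻¹) * (2 * (2 * t + 1)⁻¹) = 1 := by field_simp
  have h := (hasSum_nat_add_iff' 1).mpr ((hasSum_log_one_add_inv ht).mul_left (t + 1 / 2))
  simp only [Finset.range_one, Finset.sum_singleton, Nat.cast_zero, mul_zero, zero_add, inv_one,
    mul_one, pow_one, one_div, hu] at h
  rw [gudermannTerm, one_div]
  refine h.congr_fun fun k ↦ ?_
  rw [show 2 * (k + 1) + 1 = (2 * k + 2) + 1 by ring, pow_succ]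
  push_cast
  linear_combination -(2 * k + 3 : ℝ)⁻¹ * (2 * t + 1)⁻¹ ^ (2 * k + 2) * hu

theorem gudermannTerm_nonneg {t : ℝ} (ht : 0 < t) : 0 ≤ gudermannTerm t :=
  (hasSum_gudermannTerm ht).nonneg fun _ ↦ by positivity

theorem gudermannTerm_le {t : ℝ} (ht : 0 < t) :
    gudermannTerm t ≤ 1 / (4 * t) - 1 / (4 * (t + 1)) := by
  set r := (2 * t + 1)⁻¹ ^ 2
  have hr : r < 1 := by
    exact pow_lt_one₀ (by positivity) (inv_lt_one_of_one_lt₀ (by linarith)) two_ne_zero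
  have hgeom : HasSum (fun k : ℕ ↦ r ^ (k + 1)) (r / (1 - r)) := by
    simpa only [pow_succ', div_eq_mul_inv] using
      (hasSum_geometric_of_lt_one (by positivity) hr).mul_left r
  have hval : r / (1 - r) = 1 / (4 * t) - 1 / (4 * (t + 1)) := by
    rw [div_eq_iff (by linarith)]
    simp only [r]
    field_simp
    ring
  rw [← hval]
  refine hasSum_le (fun k ↦ ?_) (hasSum_gudermannTerm ht) hgeom
  calc (2 * k + 3 : ℝ)⁻¹ * (2 * t + 1)⁻¹ ^ (2 * k + 2) ≤ (2 * t + 1)⁻¹ ^ (2 * k + 2) :=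
        mul_le_of_le_one_left (by positivity) (inv_le_one_of_one_le₀ (by linarith))
    _ = r ^ (k + 1) := by rw [← pow_mul]; ring_nf

theorem convexOn_inv_two_mul_add_one_pow (n : ℕ) :
    ConvexOn ℝ (Ioi 0) fun t : ℝ ↦ (2 * t + 1)⁻¹ ^ n := by
  have h := (convexOn_zpow (𝕜 := ℝ) (-1)).comp_affineMap (AffineMap.lineMap (1 : ℝ) 3)
  have hinv : ConvexOn ℝ (Ioi 0) fun t : ℝ ↦ (2 * t + 1)⁻¹ := by
    refine (h.subset (fun t (ht : 0 < t) ↦ ?_) (convex_Ioi 0)).congr fun t _ ↦ ?_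
    · simp only [mem_preimage, AffineMap.lineMap_apply_ring', mem_Ioi]
      linarith
    · simp only [Function.comp_apply, AffineMap.lineMap_apply_ring', zpow_neg_one]
      ring
  exact hinv.pow (fun t (ht : 0 < t) ↦ by positivity) n

theorem antitoneOn_inv_two_mul_add_one_pow (n : ℕ) :
    AntitoneOn (fun t : ℝ ↦ (2 * t + 1)⁻¹ ^ n) (Ioi 0) := fun a (ha : 0 < a) b _ hab ↦
  pow_le_pow_left₀ (inv_nonneg.mpr (by linarith)) (inv_anti₀ (by positivity) (by linarith)) n

theorem eqOn_gudermannTerm_tsum :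
    EqOn gudermannTerm (fun t ↦ ∑' k : ℕ, (2 * k + 3 : ℝ)⁻¹ * (2 * t + 1)⁻¹ ^ (2 * k + 2))
      (Ioi 0) :=
  fun _ ht ↦ (hasSum_gudermannTerm ht).tsum_eq.symm

theorem antitoneOn_gudermannTerm : AntitoneOn gudermannTerm (Ioi 0) := by
  refine (antitoneOn_tsum (fun k ↦ ?_) fun t ht ↦ (hasSum_gudermannTerm ht).summable).congr
    eqOn_gudermannTerm_tsum.symm
  exact fun a ha b hb hab ↦ mul_le_mul_of_nonneg_left
    (antitoneOn_inv_two_mul_add_one_pow _ ha hb hab) (by positivity)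

theorem convexOn_gudermannTerm : ConvexOn ℝ (Ioi 0) gudermannTerm := by
  refine (convexOn_tsum (convex_Ioi 0) (fun k ↦ ?_)
    fun t ht ↦ (hasSum_gudermannTerm ht).summable).congr eqOn_gudermannTerm_tsum.symm
  exact (convexOn_inv_two_mul_add_one_pow _).smul (by positivity)

noncomputable def binetFun (x : ℝ) : ℝ := ∑' k : ℕ, gudermannTerm (x + k)

theorem sum_range_gudermannTerm_le {x : ℝ} (hx : 0 < x) (n : ℕ) :
    ∑ k ∈ Finset.range n, gudermannTerm (x + k) ≤ 1 / (4 * x) := by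
  have htel := Finset.sum_range_sub' (fun k : ℕ ↦ 1 / (4 * (x + k))) n
  push_cast [← add_assoc] at htel
  calc ∑ k ∈ Finset.range n, gudermannTerm (x + k)
      ≤ ∑ k ∈ Finset.range n, (1 / (4 * (x + k)) - 1 / (4 * (x + k + 1))) :=
        Finset.sum_le_sum fun k _ ↦ gudermannTerm_le (by positivity)
    _ ≤ 1 / (4 * x) := by
        rw [htel, add_zero]
        linarith [show 0 ≤ 1 / (4 * (x + n)) by positivity]

theorem summable_gudermannTerm_add {x : ℝ} (hx : 0 < x) :
    Summable fun k : ℕ ↦ gudermannTerm (x + k) :=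
  summable_of_sum_range_le (fun _ ↦ gudermannTerm_nonneg (by positivity))
    (sum_range_gudermannTerm_le hx)

theorem binetFun_nonneg {x : ℝ} (hx : 0 < x) : 0 ≤ binetFun x :=
  tsum_nonneg fun _ ↦ gudermannTerm_nonneg (by positivity)

theorem binetFun_le {x : ℝ} (hx : 0 < x) : binetFun x ≤ 1 / (4 * x) :=
  (summable_gudermannTerm_add hx).tsum_le_of_sum_range_le (sum_range_gudermannTerm_le hx)

theorem binetFun_eq_gudermannTerm_add {x : ℝ} (hx : 0 < x) :
    binetFun x = gudermannTerm x + binetFun (x + 1) := by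
  rw [binetFun, (summable_gudermannTerm_add hx).tsum_eq_zero_add, binetFun]
  push_cast
  simp only [add_zero, add_assoc, add_comm (1 : ℝ)]

theorem antitoneOn_binetFun : AntitoneOn binetFun (Ioi 0) :=
  antitoneOn_tsum (fun k a (ha : 0 < a) b (hb : 0 < b) hab ↦
      antitoneOn_gudermannTerm (by positivity : 0 < a + k) (by positivity : 0 < b + k)
        (by linarith))
    fun _ hx ↦ summable_gudermannTerm_add hx

theorem convexOn_binetFun : ConvexOn ℝ (Ioi 0) binetFun :=
  convexOn_tsum (convex_Ioi 0)
    (fun k ↦ (convexOn_gudermannTerm.translate_left (k : ℝ)).subset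
      (fun x (hx : 0 < x) ↦ show 0 < (k : ℝ) + x by positivity) (convex_Ioi 0))
    fun _ hx ↦ summable_gudermannTerm_add hx

theorem log_Gamma_eq_sub_of_convexOn {f : ℝ → ℝ} (hf_conv : ConvexOn ℝ (Ioi 0) f)
    (hf_feq : ∀ {y : ℝ}, 0 < y → f (y + 1) = f y + log y) {x : ℝ} (hx : 0 < x) :
    log (Gamma x) = f x - f 1 :=
  tendsto_nhds_unique (BohrMollerup.tendsto_log_gamma hx)
    (BohrMollerup.tendsto_logGammaSeq hf_conv hf_feq hx)

theorem convexOn_stirling_add_binetFun :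
    ConvexOn ℝ (Ioi 0) fun x ↦ (x - 1 / 2) * log x - x + binetFun x := by
  have hmul_log : ConvexOn ℝ (Ioi 0) fun x ↦ x * log x :=
    convexOn_mul_log.subset Ioi_subset_Ici_self (convex_Ioi 0)
  have hneg_log : ConvexOn ℝ (Ioi 0) fun x ↦ (1 / 2 : ℝ) • -log x :=
    strictConcaveOn_log_Ioi.concaveOn.neg.smul (by norm_num)
  refine (((hmul_log.add hneg_log).sub (concaveOn_id (convex_Ioi 0))).add
    convexOn_binetFun).congr fun x _ ↦ ?_
  simp only [Pi.add_apply, Pi.sub_apply, smul_eq_mul, id]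
  ring

theorem log_Gamma_eq_stirling_add_binetFun_sub {x : ℝ} (hx : 0 < x) :
    log (Gamma x) = (x - 1 / 2) * log x - x + binetFun x - (binetFun 1 - 1) := by
  rw [log_Gamma_eq_sub_of_convexOn convexOn_stirling_add_binetFun (fun {y} hy ↦ ?_) hx]
  · simp only [log_one, mul_zero]
    ring
  · rw [binetFun_eq_gudermannTerm_add hy, gudermannTerm,
      show 1 + y⁻¹ = (y + 1) / y by field_simp, log_div (by positivity) hy.ne']
    ring

theorem log_stirlingSeq_eq {n : ℕ} (hn : n ≠ 0) :
    log (Stirling.stirlingSeq n) = binetFun n + (1 - binetFun 1) - log 2 / 2 := by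
  have hn' : (0 : ℝ) < n := by positivity
  have hΓ := log_Gamma_eq_stirling_add_binetFun_sub hn'
  rw [Stirling.log_stirlingSeq_formula, ← Gamma_nat_eq_factorial, Gamma_add_one hn'.ne',
    log_mul hn'.ne' (Gamma_pos_of_pos hn').ne', hΓ, log_mul two_ne_zero hn'.ne',
    log_div hn'.ne' (exp_ne_zero 1), log_exp]
  ring

theorem tendsto_binetFun_natCast : Tendsto (fun n : ℕ ↦ binetFun n) atTop (𝓝 0) := by
  have hbound : Tendsto (fun n : ℕ ↦ 1 / (4 * (n : ℝ))) atTop (𝓝 0) := by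
    simpa [mul_comm] using tendsto_one_div_atTop_nhds_zero_nat.const_mul (1 / 4 : ℝ)
  refine tendsto_of_tendsto_of_tendsto_of_le_of_le' tendsto_const_nhds hbound ?_ ?_ <;>
    filter_upwards [eventually_gt_atTop 0] with n hn
  · exact binetFun_nonneg (by positivity)
  · exact binetFun_le (by positivity)

theorem one_sub_binetFun_one : 1 - binetFun 1 = log √(2 * π) := by
  have hlim : Tendsto (fun n : ℕ ↦ log (Stirling.stirlingSeq n)) atTop
      (𝓝 (0 + (1 - binetFun 1) - log 2 / 2)) :=
    ((tendsto_binetFun_natCast.add_const _).sub_const _).congr'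
      (eventually_ne_atTop 0 |>.mono fun n hn ↦ (log_stirlingSeq_eq hn).symm)
  have hπ := (continuousAt_log (sqrt_pos.mpr pi_pos).ne').tendsto.comp
    Stirling.tendsto_stirlingSeq_sqrt_pi
  rw [log_sqrt pi_pos.le] at hπ
  rw [log_sqrt (by positivity), log_mul two_ne_zero pi_pos.ne']
  linarith [tendsto_nhds_unique hlim hπ]

theorem log_Gamma_eq {x : ℝ} (hx : 0 < x) :
    log (Gamma x) = (x - 1 / 2) * log x - x + log √(2 * π) + binetFun x := by
  rw [log_Gamma_eq_stirling_add_binetFun_sub hx, ← one_sub_binetFun_one]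
  ring

end Real

theorem stmt11 (x y : ℝ) (hx : 0 < x) (hy : 0 < y) :
    Real.sqrt (2 * Real.pi) * x ^ (x - 1 / 2) * y ^ (y - 1 / 2)
        / (x + y) ^ (x + y - 1 / 2)
      ≤ Real.Gamma x * Real.Gamma y / Real.Gamma (x + y) := by
  have hxy : 0 < x + y := add_pos hx hy
  have hΓx := Gamma_pos_of_pos hx
  have hΓy := Gamma_pos_of_pos hy
  have hΓxy := Gamma_pos_of_pos hxy
  rw [← log_le_log_iff (by positivity) (by positivity), log_div (by positivity) hΓxy.ne',
    log_mul hΓx.ne' hΓy.ne', log_Gamma_eq hx, log_Gamma_eq hy, log_Gamma_eq hxy,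
    log_div (by positivity) (by positivity), log_mul (by positivity) (by positivity),
    log_mul (by positivity) (by positivity), log_rpow hx, log_rpow hy, log_rpow hxy]
  linarith [binetFun_nonneg hy, antitoneOn_binetFun hx hxy (by linarith : x ≤ x + y)]
end

section
/- Let x ∈ R^n with ‖x‖ ≤ R, n ≥ 4. Let a be uniform on S^{n−1}, τ ∼ N(0, 2R²/n), and z ∼ N(0, σ_z²), all independent. Then P[ sign(a·x − τ) ≠ sign(a·x − τ + z) ] ≤ √( σ_z² / (σ_z² + 2R²/n + 4‖x‖²/n) ). -/
open MeasureTheory ProbabilityTheory Real Set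
open scoped RealInnerProductSpace NNReal ENNReal

/-!
Condition on `⟪a, x⟫ = u`. The signs can only differ if the noise `z` crosses the gap
`u - τ`, which by the Gaussian tail bound `Q(s) ≤ exp (-s² / 2) / 2` has probability at most
`exp (-(u - τ)² / (2 σz²)) / 2`. Averaging this over `τ ~ N(0, v)` is a Gaussian integral,
at most `√(σz² / (σz² + v)) / 2` uniformly in `u`. With `v = 2R²/n` and `4‖x‖²/n ≤ 2v`,
halving the square root beats the extra term `4‖x‖²/n` in the denominator.
-/

@[fun_prop]
lemma Real.measurable_sign : Measurable Real.sign :=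
  Measurable.ite (measurableSet_lt measurable_id measurable_const) measurable_const <|
    Measurable.ite (measurableSet_lt measurable_const measurable_id) measurable_const
      measurable_const

lemma gaussianReal_Iic_self (μ : ℝ) {v : ℝ≥0} (hv : v ≠ 0) :
    gaussianReal μ v (Iic μ) = 2⁻¹ := by
  have := nullSingletonClass_gaussianReal (μ := μ) hv
  have hsymm : gaussianReal μ v (Iic μ) = gaussianReal μ v (Ioi μ) := by
    have hrefl : (gaussianReal μ v).map (2 * μ - ·) = gaussianReal μ v := by
      rw [gaussianReal_map_const_sub]; ring_nf
    rw [measure_congr Ioi_ae_eq_Ici, ← hrefl,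
      Measure.map_apply (by fun_prop) measurableSet_Ici]
    congr 1
    ext t
    simp only [mem_Iic, mem_preimage, mem_Ici]
    constructor <;> intro h <;> linarith
  have htotal : gaussianReal μ v (Iic μ) + gaussianReal μ v (Ioi μ) = 1 := by
    rw [← measure_union (Iic_disjoint_Ioi le_rfl) measurableSet_Ioi, Iic_union_Ioi, measure_univ]
  rw [← hsymm, ← two_mul] at htotal
  exact ENNReal.eq_inv_of_mul_eq_one_left (by rwa [mul_comm])

lemma gaussianReal_Iic_neg_le {v : ℝ≥0} (hv : v ≠ 0) {c : ℝ} (hc : 0 ≤ c) :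
    gaussianReal 0 v (Iic (-c)) ≤ 2⁻¹ * ENNReal.ofReal (exp (-c ^ 2 / (2 * v))) := by
  -- on `t ≤ -c`, `t² ≥ c² + (t + c)²`
  have hpdf : ∀ t ∈ Iic (-c),
      gaussianPDF 0 v t ≤ ENNReal.ofReal (exp (-c ^ 2 / (2 * v))) * gaussianPDF (-c) v t := by
    intro t ht
    rw [gaussianPDF, gaussianPDF, ← ENNReal.ofReal_mul (exp_nonneg _)]
    refine ENNReal.ofReal_le_ofReal ?_
    simp only [gaussianPDFReal, sub_zero, sub_neg_eq_add]
    rw [mul_left_comm, ← exp_add, ← add_div]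
    gcongr
    nlinarith [mem_Iic.mp ht]
  calc gaussianReal 0 v (Iic (-c))
      ≤ ∫⁻ t in Iic (-c), ENNReal.ofReal (exp (-c ^ 2 / (2 * v))) * gaussianPDF (-c) v t := by
        rw [gaussianReal_apply 0 hv]
        exact setLIntegral_mono (by fun_prop) hpdf
    _ = 2⁻¹ * ENNReal.ofReal (exp (-c ^ 2 / (2 * v))) := by
        rw [lintegral_const_mul _ (measurable_gaussianPDF _ _), ← gaussianReal_apply _ hv,
          gaussianReal_Iic_self _ hv, mul_comm]

lemma gaussianReal_Ici_le {v : ℝ≥0} (hv : v ≠ 0) {c : ℝ} (hc : 0 ≤ c) :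
    gaussianReal 0 v (Ici c) ≤ 2⁻¹ * ENNReal.ofReal (exp (-c ^ 2 / (2 * v))) := by
  have hneg := gaussianReal_map_neg (μ := 0) (v := v)
  rw [neg_zero] at hneg
  rw [← hneg, Measure.map_apply measurable_neg measurableSet_Ici, neg_preimage, neg_Ici]
  exact gaussianReal_Iic_neg_le hv hc

lemma gaussianReal_sign_ne_sign_add_le {v : ℝ≥0} (hv : v ≠ 0) {c : ℝ} (hc : c ≠ 0) :
    gaussianReal 0 v {z | sign c ≠ sign (c + z)}
      ≤ 2⁻¹ * ENNReal.ofReal (exp (-c ^ 2 / (2 * v))) := by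
  rcases hc.lt_or_gt with hneg | hpos
  · refine (measure_mono fun z hz => ?_).trans
      (neg_sq c ▸ gaussianReal_Ici_le hv (neg_nonneg.2 hneg.le))
    by_contra hz'
    exact hz (by rw [sign_of_neg hneg, sign_of_neg (by simp at hz'; linarith)])
  · refine (measure_mono fun z hz => ?_).trans (gaussianReal_Iic_neg_le hv hpos.le)
    by_contra hz'
    exact hz (by rw [sign_of_pos hpos, sign_of_pos (by simp at hz'; linarith)])

lemma lintegral_exp_neg_sq_div_gaussianReal_le {v : ℝ≥0} (hv : v ≠ 0) {b : ℝ} (hb : 0 < b)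
    (u : ℝ) :
    ∫⁻ t, ENNReal.ofReal (exp (-(u - t) ^ 2 / (2 * b))) ∂gaussianReal 0 v
      ≤ ENNReal.ofReal √(b / (b + v)) := by
  have hv' : (0 : ℝ) < v := NNReal.coe_pos.2 (pos_iff_ne_zero.2 hv)
  set k : ℝ := 1 / (2 * b) + 1 / (2 * v)
  have hk : 0 < k := by positivity
  set m : ℝ := u / (2 * b * k)
  -- completing the square in `t`
  have hsq : ∀ t : ℝ, -t ^ 2 / (2 * v) + -(u - t) ^ 2 / (2 * b) ≤ -k * (t - m) ^ 2 := by
    intro t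
    have hid : -t ^ 2 / (2 * v) + -(u - t) ^ 2 / (2 * b)
        = -k * (t - m) ^ 2 - u ^ 2 / (4 * b * v * k) := by
      simp only [k, m]; field_simp; ring
    rw [hid]
    linarith [show 0 ≤ u ^ 2 / (4 * b * v * k) by positivity]
  have hpt : ∀ t : ℝ, gaussianPDF 0 v t * ENNReal.ofReal (exp (-(u - t) ^ 2 / (2 * b)))
      ≤ ENNReal.ofReal ((√(2 * π * v))⁻¹ * exp (-k * (t - m) ^ 2)) := by
    intro t
    rw [gaussianPDF, ← ENNReal.ofReal_mul (gaussianPDFReal_nonneg _ _ _)]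
    refine ENNReal.ofReal_le_ofReal ?_
    rw [gaussianPDFReal, sub_zero, mul_assoc, ← exp_add]
    gcongr
    exact hsq t
  have hint : Integrable (fun t => (√(2 * π * v))⁻¹ * exp (-k * (t - m) ^ 2)) :=
    ((integrable_exp_neg_mul_sq hk).comp_sub_right m).const_mul _
  calc ∫⁻ t, ENNReal.ofReal (exp (-(u - t) ^ 2 / (2 * b))) ∂gaussianReal 0 v
      ≤ ∫⁻ t, ENNReal.ofReal ((√(2 * π * v))⁻¹ * exp (-k * (t - m) ^ 2)) := by
        rw [gaussianReal_of_var_ne_zero 0 hv,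
          lintegral_withDensity_eq_lintegral_mul _ (measurable_gaussianPDF 0 v) (by fun_prop)]
        exact lintegral_mono hpt
    _ = ENNReal.ofReal ((√(2 * π * v))⁻¹ * √(π / k)) := by
        rw [← ofReal_integral_eq_lintegral_ofReal hint (ae_of_all _ fun _ => by positivity),
          integral_const_mul, integral_sub_right_eq_self (fun t => exp (-k * t ^ 2)),
          integral_gaussian]
    _ = ENNReal.ofReal √(b / (b + v)) := by
        rw [← sqrt_inv, ← sqrt_mul (by positivity)]
        congr 2
        simp only [k]
        field_simp
        ring

lemma gaussianReal_prod_sign_ne_sign_add_le {v w : ℝ≥0} (hv : v ≠ 0) (hw : w ≠ 0) (u : ℝ) :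
    (gaussianReal 0 v).prod (gaussianReal 0 w) {p | sign (u - p.1) ≠ sign (u - p.1 + p.2)}
      ≤ 2⁻¹ * ENNReal.ofReal √(w / (w + v)) := by
  have hmeas : MeasurableSet {p : ℝ × ℝ | sign (u - p.1) ≠ sign (u - p.1 + p.2)} :=
    (measurableSet_eq_fun (by fun_prop) (by fun_prop)).compl
  -- `τ = u` has probability zero, and off it the flip bound applies
  have hae : ∀ᵐ t ∂gaussianReal 0 v, gaussianReal 0 w {z | sign (u - t) ≠ sign (u - t + z)}
      ≤ 2⁻¹ * ENNReal.ofReal (exp (-(u - t) ^ 2 / (2 * w))) := by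
    have := nullSingletonClass_gaussianReal (μ := 0) hv
    filter_upwards [measure_eq_zero_iff_ae_notMem.1 (measure_singleton u)] with t ht
    exact gaussianReal_sign_ne_sign_add_le hw (sub_ne_zero.2 (Ne.symm ht))
  calc (gaussianReal 0 v).prod (gaussianReal 0 w) {p | sign (u - p.1) ≠ sign (u - p.1 + p.2)}
      ≤ ∫⁻ t, 2⁻¹ * ENNReal.ofReal (exp (-(u - t) ^ 2 / (2 * w))) ∂gaussianReal 0 v := by
        rw [Measure.prod_apply hmeas]
        exact lintegral_mono_ae hae
    _ ≤ 2⁻¹ * ENNReal.ofReal √(w / (w + v)) := by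
        rw [lintegral_const_mul _ (by fun_prop)]
        gcongr
        exact lintegral_exp_neg_sq_div_gaussianReal_le hv (by positivity) u

lemma measure_preimage_le_of_map_eq_prod {Ω α β : Type*} [MeasurableSpace Ω]
    [MeasurableSpace α] [MeasurableSpace β] {P : Measure Ω} {μ : Measure α}
    [IsProbabilityMeasure μ] {ν : Measure β} [SFinite ν] {Z : Ω → α × β} (hZ : Measurable Z) (hlaw : P.map Z = μ.prod ν)
    {S : Set (α × β)} (hS : MeasurableSet S) {C : ℝ≥0∞}
    (hC : ∀ u, ν (Prod.mk u ⁻¹' S) ≤ C) :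
    P (Z ⁻¹' S) ≤ C := by
  rw [← Measure.map_apply hZ hS, hlaw, Measure.prod_apply hS]
  calc ∫⁻ u, ν (Prod.mk u ⁻¹' S) ∂μ ≤ ∫⁻ _, C ∂μ := lintegral_mono hC
    _ = C := by simp

lemma MeasureTheory.Measure.map_prodMk_comp_eq_prod {Ω α β γ : Type*} [MeasurableSpace Ω]
    [MeasurableSpace α] [MeasurableSpace β] [MeasurableSpace γ] {P : Measure Ω}
    {X : Ω → α} {Y : Ω → β} {f : α → γ}
    (hX : Measurable X) (hY : Measurable Y) (hf : Measurable f) {μ : Measure α} {ν : Measure β}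
    [SFinite μ] [SFinite ν] (hlaw : P.map (fun ω => (X ω, Y ω)) = μ.prod ν) :
    P.map (fun ω => (f (X ω), Y ω)) = (μ.map f).prod ν := by
  rw [← Measure.map_id (μ := ν), Measure.map_prod_map _ _ hf measurable_id, ← hlaw,
    Measure.map_map (hf.prodMap measurable_id) (hX.prodMk hY)]
  rfl

lemma measure_sign_ne_sign_add_le {Ω : Type*} [MeasurableSpace Ω] {P : Measure Ω}
    {W τ z : Ω → ℝ} (hW : Measurable W) (hτ : Measurable τ) (hz : Measurable z)
    {μ : Measure ℝ} [IsProbabilityMeasure μ] {v w : ℝ≥0} (hv : v ≠ 0) (hw : w ≠ 0)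
    (hlaw : P.map (fun ω => (W ω, τ ω, z ω))
      = μ.prod ((gaussianReal 0 v).prod (gaussianReal 0 w))) :
    P {ω | sign (W ω - τ ω) ≠ sign (W ω - τ ω + z ω)} ≤ 2⁻¹ * ENNReal.ofReal √(w / (w + v)) :=
  measure_preimage_le_of_map_eq_prod (by fun_prop) hlaw
    (S := {p : ℝ × ℝ × ℝ | sign (p.1 - p.2.1) ≠ sign (p.1 - p.2.1 + p.2.2)})
    (measurableSet_eq_fun (by fun_prop) (by fun_prop)).compl
    (gaussianReal_prod_sign_ne_sign_add_le hv hw)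

lemma sqrt_div_div_two_le {s d w : ℝ} (hs : 0 ≤ s) (hdw : 0 < d + w) (hw : w ≤ 3 * d) :
    √(s / d) / 2 ≤ √(s / (d + w)) := by
  have h4 : √(s / d) / 2 = √(s / (4 * d)) := by
    rw [show s / (4 * d) = s / d / 2 ^ 2 by ring, sqrt_div' _ (sq_nonneg 2),
      sqrt_sq zero_le_two]
  rw [h4]
  gcongr
  linarith

theorem stmt15 (n : ℕ) (hn : 4 ≤ n) (R σz : ℝ) (hR : 0 < R) (hσz : 0 < σz)
    (x : EuclideanSpace ℝ (Fin n)) (hx : ‖x‖ ≤ R)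
    (Ω : Type*) [MeasureSpace Ω] [IsProbabilityMeasure (ℙ : Measure Ω)]
    (a : Ω → EuclideanSpace ℝ (Fin n)) (τ z : Ω → ℝ)
    (hma : Measurable a) (hmτ : Measurable τ) (hmz : Measurable z)
    (hτgauss : Measure.map τ ℙ = gaussianReal 0 ⟨2 * R ^ 2 / n, by positivity⟩)
    (hzgauss : Measure.map z ℙ = gaussianReal 0 ⟨σz ^ 2, sq_nonneg σz⟩)
    (hindep : Measure.map (fun ω => (a ω, τ ω, z ω)) ℙ
      = (Measure.map a ℙ).prod ((Measure.map τ ℙ).prod (Measure.map z ℙ))) :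
    ℙ {ω | Real.sign (⟪a ω, x⟫ - τ ω) ≠ Real.sign (⟪a ω, x⟫ - τ ω + z ω)}
      ≤ ENNReal.ofReal
        (Real.sqrt (σz ^ 2 / (σz ^ 2 + 2 * R ^ 2 / n + 4 * ‖x‖ ^ 2 / n))) := by
  have hn₀ : (0 : ℝ) < n := by exact_mod_cast (show 0 < n by omega)
  -- naming the variances lets instance search see `ℝ≥0` instead of the subtype `{r // 0 ≤ r}`
  set vτ : ℝ≥0 := ⟨2 * R ^ 2 / n, by positivity⟩
  set vz : ℝ≥0 := ⟨σz ^ 2, sq_nonneg σz⟩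
  have hvτ : vτ ≠ 0 := ne_of_gt (show (0 : ℝ) < 2 * R ^ 2 / n by positivity)
  have hvz : vz ≠ 0 := ne_of_gt (show (0 : ℝ) < σz ^ 2 by positivity)
  have hinner : Measurable fun v : EuclideanSpace ℝ (Fin n) => ⟪v, x⟫ := by fun_prop
  have := Measure.isProbabilityMeasure_map (μ := ℙ) hma.aemeasurable
  have := Measure.isProbabilityMeasure_map (μ := Measure.map a ℙ) hinner.aemeasurable
  rw [hτgauss, hzgauss] at hindep
  have hlaw := Measure.map_prodMk_comp_eq_prod hma (hmτ.prodMk hmz) hinner hindep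
  refine (measure_sign_ne_sign_add_le (by fun_prop) hmτ hmz hvτ hvz hlaw).trans ?_
  have hhalf : (2⁻¹ : ℝ≥0∞) = ENNReal.ofReal 2⁻¹ := by
    rw [ENNReal.ofReal_inv_of_pos two_pos, ENNReal.ofReal_ofNat]
  rw [hhalf, ← ENNReal.ofReal_mul (by norm_num), inv_mul_eq_div]
  have hx2 : 4 * ‖x‖ ^ 2 / n ≤ 3 * (σz ^ 2 + 2 * R ^ 2 / n) := by
    rw [mul_add, ← mul_div_assoc, ← mul_assoc, div_le_iff₀ hn₀, add_mul,
      div_mul_cancel₀ _ hn₀.ne']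
    nlinarith [sq_nonneg σz, norm_nonneg x]
  exact ENNReal.ofReal_le_ofReal (sqrt_div_div_two_le (sq_nonneg σz) (by positivity) hx2)
end

section
/- Suppose m ≥ (e/18)·(η/2)^{1/n} and ζ > 0 satisfies m = (1/(2ζ²))·(2n·log(3√n/ζ) + log(2/η)) for given η ∈ (0,1), n ≥ 1. Then ζ ≤ √( (n·log(18m) + log(2/η)) / (2m) ). -/
/-!
Put `c = (2/η)^(1/n)` and `β = (9n/ζ²)·c`. The hypothesis on `m` says exactly `n log β = 2mζ²`,
hence `β log β = 18mc`, i.e. `β = x / W x` for `x = 18mc`, and `x ≥ e` by the lower bound on `m`.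
For `x ≥ e` one has `W x ≥ 1`, so `β ≤ x`, and taking logarithms gives
`2mζ² = n log β ≤ n log (18mc) = n log (18m) + log (2/η)`.
-/

open Real

namespace Real

lemma one_le_log_of_exp_one_le_mul_log {b : ℝ} (hb : 0 < b) (h : exp 1 ≤ b * log b) :
    1 ≤ log b := by
  by_contra! hlt
  have hb_lt : b < exp 1 := (log_lt_iff_lt_exp hb).1 hlt
  nlinarith

/-- This is `W x ≤ log x` for `x ≥ e`, written in terms of `b = x / W x`. -/
lemma log_le_log_mul_log {b : ℝ} (hb : 0 < b) (h : exp 1 ≤ b * log b) :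
    log b ≤ log (b * log b) :=
  log_le_log hb (le_mul_of_one_le_right hb.le (one_le_log_of_exp_one_le_mul_log hb h))

lemma mul_log_mul_rpow_one_div {n x y : ℝ} (hn : n ≠ 0) (hx : 0 < x) (hy : 0 < y) :
    n * log (x * y ^ (1 / n)) = n * log x + log y := by
  rw [log_mul hx.ne' (rpow_pos_of_pos hy _).ne', log_rpow hy]
  field_simp

end Real

theorem stmt19 (n : ℕ) (hn : 1 ≤ n) (η m ζ : ℝ) (hη : η ∈ Set.Ioo (0 : ℝ) 1)
    (hζ : 0 < ζ)
    (hm : Real.exp 1 / 18 * (η / 2) ^ (1 / (n : ℝ)) ≤ m)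
    (heq : m = (1 / (2 * ζ ^ 2))
      * (2 * n * Real.log (3 * Real.sqrt n / ζ) + Real.log (2 / η))) :
    ζ ≤ Real.sqrt ((n * Real.log (18 * m) + Real.log (2 / η)) / (2 * m)) := by
  obtain ⟨hη0, -⟩ := hη
  have hn0 : (0 : ℝ) < n := by exact_mod_cast hn
  have h2η : 0 < 2 / η := by positivity
  set c := (2 / η) ^ (1 / (n : ℝ)) with hc
  have hc0 : 0 < c := by positivity
  have hm0 : 0 < m := lt_of_lt_of_le (by positivity) hm
  have hlog9 : log (9 * n / ζ ^ 2) = 2 * log (3 * sqrt n / ζ) := by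
    rw [show 9 * (n : ℝ) / ζ ^ 2 = (3 * sqrt n / ζ) ^ 2 by
      rw [div_pow, mul_pow, sq_sqrt hn0.le]; norm_num, log_pow]
    norm_num
  have hlogβ : n * log (9 * n / ζ ^ 2 * c) = 2 * m * ζ ^ 2 := by
    rw [mul_log_mul_rpow_one_div hn0.ne' (by positivity) h2η, hlog9, heq]
    field_simp
  have hβlogβ : 9 * n / ζ ^ 2 * c * log (9 * n / ζ ^ 2 * c) = 18 * m * c := by
    rw [show log (9 * n / ζ ^ 2 * c) = 2 * m * ζ ^ 2 / n by
      rw [← hlogβ]; field_simp]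
    field_simp
    ring
  have he : exp 1 ≤ 18 * m * c := by
    rw [show (η / 2) ^ (1 / (n : ℝ)) = c⁻¹ by rw [hc, ← inv_rpow h2η.le, inv_div],
      ← div_eq_mul_inv, div_div, div_le_iff₀ (by positivity)] at hm
    linarith
  have hkey : 2 * m * ζ ^ 2 ≤ n * log (18 * m) + log (2 / η) := by
    rw [← mul_log_mul_rpow_one_div hn0.ne' (by positivity) h2η, ← hlogβ, ← hβlogβ]
    exact mul_le_mul_of_nonneg_left
      (log_le_log_mul_log (by positivity) (hβlogβ ▸ he)) hn0.le
  rw [le_sqrt hζ.le (div_nonneg (by nlinarith) (by positivity)), le_div_iff₀ (by positivity)]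
  linarith
end
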